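/- Extremal members exist on both sides of the fairness–accuracy tradeoff: let S, A finite, q(s,a) = p(s)m(a) with all masses positive, and f : S → A → (0,1) non-constant in s for some a. Then the minimum over all rules h : S × A → (0,1) of E_q[KL(Bern(f(S,A)) ‖ Bern(h(S,A)))] is 0 (attained uniquely by h = f), while the minimum over EO-fair rules (h constant in s) is Σ_{s,a} q(s,a) KL(Bern(f(s,a)) ‖ Bern(f_eo(a))), which is strictly positive. Hence imposing the EO constraint strictly increases the best attainable KL loss whenever the ML predictor actually uses the sensitive attribute. -/

import Mathlib

/-!
For fixed `a`, the `p`-average over `s` of `KL(Bern(f s a) ‖ Bern(y))` equals its value at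
`y = f_eo a` plus `KL(Bern(f_eo a) ‖ Bern(y))`: the terms that depend on `y` are affine in `f s a`,
so they only see its mean `f_eo a`. Hence `f_eo` is the best EO-fair rule. By Gibbs' inequality
(`klFun ≥ 0`, with equality only at `1`) a `q`-weighted KL loss vanishes only at the rule `f`
itself, which for `f_eo` would force `f` to be constant in `s`.
-/

open Finset

/-- KL divergence between Bernoulli distributions with parameters `x` and `y`. -/
noncomputable def klBern (x y : ℝ) : ℝ :=
  x * Real.log (x / y) + (1 - x) * Real.log ((1 - x) / (1 - y))

open Real InformationTheory

lemma klBern_self (x : ℝ) : klBern x x = 0 := by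
  rcases eq_or_ne x 0 with rfl | hx0
  · simp [klBern]
  rcases eq_or_ne x 1 with rfl | hx1
  · simp [klBern]
  rw [klBern, div_self hx0, div_self (sub_ne_zero.mpr hx1.symm), log_one]
  ring

lemma klBern_eq_klFun (x : ℝ) {y : ℝ} (hy0 : y ≠ 0) (hy1 : y ≠ 1) :
    klBern x y = y * klFun (x / y) + (1 - y) * klFun ((1 - x) / (1 - y)) := by
  have hy1' : 1 - y ≠ 0 := sub_ne_zero.mpr hy1.symm
  simp only [klBern, klFun_apply]
  field_simp
  ring

lemma klBern_nonneg {x y : ℝ} (hx0 : 0 ≤ x) (hx1 : x ≤ 1) (hy0 : 0 < y) (hy1 : y < 1) :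
    0 ≤ klBern x y := by
  rw [klBern_eq_klFun x hy0.ne' hy1.ne]
  exact add_nonneg (mul_nonneg hy0.le (klFun_nonneg (div_nonneg hx0 hy0.le)))
    (mul_nonneg (by linarith) (klFun_nonneg (div_nonneg (by linarith) (by linarith))))

lemma klBern_eq_zero_iff {x y : ℝ} (hx0 : 0 ≤ x) (hx1 : x ≤ 1) (hy0 : 0 < y) (hy1 : y < 1) :
    klBern x y = 0 ↔ x = y := by
  refine ⟨fun h => ?_, fun h => h ▸ klBern_self x⟩
  rw [klBern_eq_klFun x hy0.ne' hy1.ne] at h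
  have hxy := klFun_nonneg (div_nonneg hx0 hy0.le)
  have hxy' := klFun_nonneg (div_nonneg (by linarith : 0 ≤ 1 - x) (by linarith : 0 ≤ 1 - y))
  have hterm := ((add_eq_zero_iff_of_nonneg (mul_nonneg hy0.le hxy)
    (mul_nonneg (by linarith) hxy')).mp h).1
  rw [mul_eq_zero, klFun_eq_zero_iff (div_nonneg hx0 hy0.le), div_eq_one_iff_eq hy0.ne'] at hterm
  exact hterm.resolve_left hy0.ne'

lemma mul_log_div_eq_add (u : ℝ) {v w : ℝ} (hv : v ≠ 0) (hw : w ≠ 0) :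
    u * log (u / w) = u * log (u / v) + u * log (v / w) := by
  rcases eq_or_ne u 0 with rfl | hu
  · simp
  rw [log_div hu hw, log_div hu hv, log_div hv hw]
  ring

lemma klBern_eq_add (x : ℝ) {g h : ℝ} (hg0 : g ≠ 0) (hg1 : g ≠ 1) (hh0 : h ≠ 0) (hh1 : h ≠ 1) :
    klBern x h = klBern x g + (x * log (g / h) + (1 - x) * log ((1 - g) / (1 - h))) := by
  rw [klBern, klBern, mul_log_div_eq_add x hg0 hh0,
    mul_log_div_eq_add (1 - x) (sub_ne_zero.mpr hg1.symm) (sub_ne_zero.mpr hh1.symm)]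
  ring

lemma sum_mul_klBern_eq_add {ι : Type*} [Fintype ι] (w x : ι → ℝ) (hw : ∑ i, w i = 1)
    {g h : ℝ} (hg : ∑ i, w i * x i = g) (hg0 : g ≠ 0) (hg1 : g ≠ 1) (hh0 : h ≠ 0) (hh1 : h ≠ 1) :
    ∑ i, w i * klBern (x i) h = ∑ i, w i * klBern (x i) g + klBern g h := by
  have hlin : ∀ i, w i * klBern (x i) h = w i * klBern (x i) g +
      (w i * x i * log (g / h) + (w i - w i * x i) * log ((1 - g) / (1 - h))) := fun i => by
    rw [klBern_eq_add _ hg0 hg1 hh0 hh1]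
    ring
  simp_rw [hlin, sum_add_distrib, ← sum_mul, sum_sub_distrib, hw, hg]
  rfl

lemma sum_sum_eq_zero_iff_of_nonneg {S A M : Type*} [Fintype S] [Fintype A] [AddCommMonoid M]
    [PartialOrder M] [AddLeftMono M] {F : S → A → M} (hF : ∀ s a, 0 ≤ F s a) :
    ∑ s, ∑ a, F s a = 0 ↔ ∀ s a, F s a = 0 := by
  rw [← Fintype.sum_prod_type' F,
    Fintype.sum_eq_zero_iff_of_nonneg (f := fun x : S × A => F x.1 x.2) fun x => hF x.1 x.2]
  simp [funext_iff]

section WeightedLoss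

variable {S A : Type*} [Fintype S] [Fintype A] {q x y : S → A → ℝ}

lemma sum_sum_mul_klBern_nonneg (hq : ∀ s a, 0 ≤ q s a) (hx0 : ∀ s a, 0 ≤ x s a)
    (hx1 : ∀ s a, x s a ≤ 1) (hy0 : ∀ s a, 0 < y s a) (hy1 : ∀ s a, y s a < 1) :
    0 ≤ ∑ s, ∑ a, q s a * klBern (x s a) (y s a) :=
  sum_nonneg fun s _ => sum_nonneg fun a _ =>
    mul_nonneg (hq s a) (klBern_nonneg (hx0 s a) (hx1 s a) (hy0 s a) (hy1 s a))

lemma sum_sum_mul_klBern_eq_zero_iff (hq : ∀ s a, 0 < q s a) (hx0 : ∀ s a, 0 ≤ x s a)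
    (hx1 : ∀ s a, x s a ≤ 1) (hy0 : ∀ s a, 0 < y s a) (hy1 : ∀ s a, y s a < 1) :
    ∑ s, ∑ a, q s a * klBern (x s a) (y s a) = 0 ↔ ∀ s a, x s a = y s a := by
  rw [sum_sum_eq_zero_iff_of_nonneg fun s a =>
    mul_nonneg (hq s a).le (klBern_nonneg (hx0 s a) (hx1 s a) (hy0 s a) (hy1 s a))]
  refine forall₂_congr fun s a => ?_
  rw [mul_eq_zero_iff_left (hq s a).ne', klBern_eq_zero_iff (hx0 s a) (hx1 s a) (hy0 s a) (hy1 s a)]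

lemma sum_sum_mul_klBern_eq_add {p : S → ℝ} {m : A → ℝ} {f : S → A → ℝ} {g h : A → ℝ}
    (hpsum : ∑ s, p s = 1) (hq : ∀ s a, q s a = p s * m a) (hg : ∀ a, ∑ s, p s * f s a = g a)
    (hg0 : ∀ a, g a ≠ 0) (hg1 : ∀ a, g a ≠ 1) (hh0 : ∀ a, h a ≠ 0) (hh1 : ∀ a, h a ≠ 1) :
    ∑ s, ∑ a, q s a * klBern (f s a) (h a) =
      ∑ s, ∑ a, q s a * klBern (f s a) (g a) + ∑ a, m a * klBern (g a) (h a) := by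
  have hswap : ∀ k : A → ℝ, ∑ s, ∑ a, q s a * klBern (f s a) (k a) =
      ∑ a, m a * ∑ s, p s * klBern (f s a) (k a) := fun k => by
    rw [sum_comm]
    refine sum_congr rfl fun a _ => ?_
    rw [mul_sum]
    exact sum_congr rfl fun s _ => by rw [hq]; ring
  rw [hswap, hswap, ← sum_add_distrib]
  refine sum_congr rfl fun a _ => ?_
  rw [sum_mul_klBern_eq_add p (f · a) hpsum (hg a) (hg0 a) (hg1 a) (hh0 a) (hh1 a), mul_add]

end WeightedLoss

theorem eo_constraint_strictly_costly_general
    {S A : Type} [Fintype S] [Fintype A]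
    (p : S → ℝ) (hp : ∀ s, 0 < p s) (hpsum : ∑ s, p s = 1)
    (m : A → ℝ) (hm : ∀ a, 0 < m a)
    (q : S → A → ℝ) (hq : ∀ s a, q s a = p s * m a)
    (f : S → A → ℝ) (hf0 : ∀ s a, 0 < f s a) (hf1 : ∀ s a, f s a < 1)
    (hnc : ∃ (a : A) (s s' : S), f s a ≠ f s' a)
    (feo : A → ℝ) (hfeo : ∀ a, feo a = ∑ s, p s * f s a) :
    -- the unconstrained minimum is 0, attained uniquely by h = f
    ((∑ s, ∑ a, q s a * klBern (f s a) (f s a)) = 0 ∧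
      (∀ h : S → A → ℝ, (∀ s a, 0 < h s a) → (∀ s a, h s a < 1) →
        0 ≤ ∑ s, ∑ a, q s a * klBern (f s a) (h s a) ∧
        ((∑ s, ∑ a, q s a * klBern (f s a) (h s a)) = 0 → ∀ s a, h s a = f s a))) ∧
    -- the minimum over EO-fair rules is attained at f_eo
    (∀ h : A → ℝ, (∀ a, 0 < h a) → (∀ a, h a < 1) →
      (∑ s, ∑ a, q s a * klBern (f s a) (feo a)) ≤
        ∑ s, ∑ a, q s a * klBern (f s a) (h a)) ∧
    -- and it is strictly positive
    0 < ∑ s, ∑ a, q s a * klBern (f s a) (feo a) := by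
  have hq_pos : ∀ s a, 0 < q s a := fun s a => hq s a ▸ mul_pos (hp s) (hm a)
  have hfeo_mem : ∀ a, feo a ∈ Set.Ioo 0 1 := fun a => by
    simpa only [hfeo, smul_eq_mul] using (convex_Ioo (0 : ℝ) 1).sum_mem (fun s _ => (hp s).le)
      hpsum fun s _ => ⟨hf0 s a, hf1 s a⟩
  have hf_nonneg := fun s a => (hf0 s a).le
  have hf_le_one := fun s a => (hf1 s a).le
  have hfeo0 : ∀ (_ : S) a, 0 < feo a := fun _ a => (hfeo_mem a).1
  have hfeo1 : ∀ (_ : S) a, feo a < 1 := fun _ a => (hfeo_mem a).2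
  refine ⟨⟨by simp [klBern_self], fun h hh0 hh1 => ⟨?_, fun hzero s a => ?_⟩⟩,
    fun h hh0 hh1 => ?_, ?_⟩
  · exact sum_sum_mul_klBern_nonneg (fun s a => (hq_pos s a).le) hf_nonneg hf_le_one hh0 hh1
  · exact ((sum_sum_mul_klBern_eq_zero_iff hq_pos hf_nonneg hf_le_one hh0 hh1).mp hzero s a).symm
  · rw [sum_sum_mul_klBern_eq_add hpsum hq (fun a => (hfeo a).symm) (fun a => (hfeo_mem a).1.ne')
      (fun a => (hfeo_mem a).2.ne) (fun a => (hh0 a).ne') (fun a => (hh1 a).ne)]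
    exact le_add_of_nonneg_right <| sum_nonneg fun a _ =>
      mul_nonneg (hm a).le (klBern_nonneg (hfeo_mem a).1.le (hfeo_mem a).2.le (hh0 a) (hh1 a))
  · refine (sum_sum_mul_klBern_nonneg (fun s a => (hq_pos s a).le) hf_nonneg hf_le_one hfeo0
      hfeo1).lt_of_ne' fun hzero => ?_
    have hconst := (sum_sum_mul_klBern_eq_zero_iff hq_pos hf_nonneg hf_le_one hfeo0 hfeo1).mp hzero
    obtain ⟨a, s, s', hne⟩ := hnc
    exact hne ((hconst s a).trans (hconst s' a).symm)

theorem eo_constraint_strictly_costly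
    {S A : Type} [Fintype S] [Fintype A]
    (p : S → ℝ) (hp : ∀ s, 0 < p s) (hpsum : ∑ s, p s = 1)
    (m : A → ℝ) (hm : ∀ a, 0 < m a) (hmsum : ∑ a, m a = 1)
    (q : S → A → ℝ) (hq : ∀ s a, q s a = p s * m a)
    (f : S → A → ℝ) (hf0 : ∀ s a, 0 < f s a) (hf1 : ∀ s a, f s a < 1)
    (hnc : ∃ (a : A) (s s' : S), f s a ≠ f s' a)
    (feo : A → ℝ) (hfeo : ∀ a, feo a = ∑ s, p s * f s a) :
    -- the unconstrained minimum is 0, attained uniquely by h = f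
    ((∑ s, ∑ a, q s a * klBern (f s a) (f s a)) = 0 ∧
      (∀ h : S → A → ℝ, (∀ s a, 0 < h s a) → (∀ s a, h s a < 1) →
        0 ≤ ∑ s, ∑ a, q s a * klBern (f s a) (h s a) ∧
        ((∑ s, ∑ a, q s a * klBern (f s a) (h s a)) = 0 → ∀ s a, h s a = f s a))) ∧
    -- the minimum over EO-fair rules is attained at f_eo
    (∀ h : A → ℝ, (∀ a, 0 < h a) → (∀ a, h a < 1) →
      (∑ s, ∑ a, q s a * klBern (f s a) (feo a)) ≤
        ∑ s, ∑ a, q s a * klBern (f s a) (h a)) ∧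
    -- and it is strictly positive
    0 < ∑ s, ∑ a, q s a * klBern (f s a) (feo a) :=
  eo_constraint_strictly_costly_general p hp hpsum m hm q hq f hf0 hf1 hnc feo hfeo
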